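/- arXiv:1803.09141 — 4 statements merged into one kernel-verified Lean document; each statement's English description precedes it below -/
import Mathlib

section
/- If G is a graph, v a vertex of G with exactly k neighbors, and 𝓗 = (L,H) is a k-fold cover of G (each L(u) has size k, H[L(u)] is a clique, and edges between L(u) and L(w) form a matching present only when u=w or uw ∈ E(G)), then there are at most k! independent sets I in H restricted to the union of L(u) over neighbors u of v such that |I| = k, I meets each neighbor's list exactly once, and every vertex of L(v) is adjacent in H to some vertex of I. -/
open SimpleGraph Finset

/-- A cover `(L, H)` of a graph `G`: the lists `L u` partition `V(H)`, each `H[L u]` is a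
clique, edges of `H` between lists occur only within a list or along edges of `G`, and for
each edge of `G` the cross-edges form a matching. -/
structure DPCover {V : Type*} {W : Type*} (G : SimpleGraph V) (H : SimpleGraph W)
    (L : V → Finset W) : Prop where
  partition : ∀ w : W, ∃! u : V, w ∈ L u
  clique : ∀ u : V, ∀ a ∈ L u, ∀ b ∈ L u, a ≠ b → H.Adj a b
  cross : ∀ a b : W, H.Adj a b → ∀ u v : V, a ∈ L u → b ∈ L v → u = v ∨ G.Adj u v
  matching : ∀ u v : V, G.Adj u v → ∀ a ∈ L u, ∀ b ∈ L v, ∀ b' ∈ L v,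
    H.Adj a b → H.Adj a b' → b = b'

/-- An `𝓗`-coloring: a choice of one vertex from each list forming an independent set in `H`. -/
def IsHColoring {V : Type*} {W : Type*} (H : SimpleGraph W) (L : V → Finset W)
    (c : V → W) : Prop :=
  (∀ u : V, c u ∈ L u) ∧ ∀ u v : V, u ≠ v → ¬ H.Adj (c u) (c v)

/-- `G` is DP-`k`-colorable: every `k`-fold cover admits an `𝓗`-coloring (every `k`-fold
cover is isomorphic to one whose vertex set lives in `V × ℕ`). -/
def DPColorable {V : Type*} (G : SimpleGraph V) (k : ℕ) : Prop :=
  ∀ (H : SimpleGraph (V × ℕ)) (L : V → Finset (V × ℕ)),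
    DPCover G H L → (∀ u, (L u).card = k) → ∃ c, IsHColoring H L c

/-- The DP-chromatic number: the least `k` such that `G` is DP-`k`-colorable. -/
noncomputable def chiDP {V : Type*} (G : SimpleGraph V) : ℕ := sInf {k | DPColorable G k}

/-- The complete bipartite graph `K_{k,t}`. -/
def Kb (k t : ℕ) : SimpleGraph (Fin k ⊕ Fin t) := completeBipartiteGraph (Fin k) (Fin t)

/-!
A bad set `I` for `v` meets each list `L u`, `u ∈ N(v)`, in a single vertex, and every
`w ∈ L v` has a neighbour `x_w ∈ I`. Since the cross-edges between `L v` and `L u` form a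
matching, `w ↦ x_w` is injective and so is `w ↦ (the list containing x_w)`, an
injection `σ : L v → N(v)`. Conversely `σ` determines `I`: inside `L (σ w)` the vertex `w` has
at most one neighbour. So there are at most as many bad sets as injections `L v → N(v)`,
namely `k!`.
-/

section

variable {V W : Type*} {G : SimpleGraph V} {H : SimpleGraph W} {L : V → Finset W}

theorem DPCover.eq_of_adj_of_adj (hcov : DPCover G H L) {u v : V} (huv : G.Adj u v)
    {a b b' : W} (ha : a ∈ L u) (hb : b ∈ L v) (hb' : b' ∈ L v) (h : H.Adj a b)
    (h' : H.Adj a b') : b = b' :=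
  hcov.matching u v huv a ha b hb b' hb' h h'

def neighborsInLists (H : SimpleGraph W) [DecidableRel H.Adj] [DecidableEq W]
    (L : V → Finset W) {s : Finset W} (σ : s → V) : Finset W :=
  univ.biUnion fun w => (L (σ w)).filter (H.Adj w)

theorem DPCover.exists_embedding_neighborsInLists_eq [DecidableRel H.Adj] [DecidableEq W]
    (hcov : DPCover G H L) {v : V} [Fintype (G.neighborSet v)] {I : Finset W}
    (hsub : I ⊆ (G.neighborFinset v).biUnion L) (hcard : #I = #(L v))
    (hone : ∀ u ∈ G.neighborFinset v, #(I ∩ L u) = 1)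
    (hbad : ∀ w ∈ L v, ∃ x ∈ I, H.Adj w x) :
    ∃ σ : L v ↪ G.neighborFinset v, neighborsInLists H L (fun w => (σ w : V)) = I := by
  have hlist : ∀ w : L v, ∃ u : G.neighborFinset v, ∃ x ∈ I, x ∈ L u ∧ H.Adj w x := by
    rintro ⟨w, hw⟩
    obtain ⟨x, hxI, hwx⟩ := hbad w hw
    obtain ⟨u, hu, hxu⟩ := mem_biUnion.mp (hsub hxI)
    exact ⟨⟨u, hu⟩, x, hxI, hxu, hwx⟩
  choose σ x hxI hxL hadj using hlist
  have hGadj : ∀ w, G.Adj v (σ w) := fun w => (G.mem_neighborFinset v _).mp (σ w).2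
  have hx_inj : Function.Injective x := fun w w' h =>
    Subtype.ext <| hcov.eq_of_adj_of_adj (hGadj w).symm (hxL w) w.2 w'.2 (hadj w).symm
      (h ▸ (hadj w').symm)
  have hσ_inj : Function.Injective σ := by
    intro w w' h
    apply hx_inj
    obtain ⟨y, hy⟩ := card_eq_one.mp (hone _ (σ w).2)
    have hw : x w ∈ I ∩ L (σ w) := mem_inter.mpr ⟨hxI w, hxL w⟩
    have hw' : x w' ∈ I ∩ L (σ w) := mem_inter.mpr ⟨hxI w', h ▸ hxL w'⟩
    rw [hy, mem_singleton] at hw hw'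
    rw [hw, hw']
  refine ⟨⟨σ, hσ_inj⟩, eq_of_subset_of_card_le ?_ ?_⟩
  · intro y hy
    obtain ⟨w, -, hy⟩ := mem_biUnion.mp hy
    obtain ⟨hyL, hwy⟩ := mem_filter.mp hy
    rw [hcov.eq_of_adj_of_adj (hGadj w) w.2 hyL (hxL w) hwy (hadj w)]
    exact hxI w
  · calc #I = #(univ.image x) := by
          rw [hcard, card_image_of_injective _ hx_inj, card_univ, Fintype.card_coe]
      _ ≤ _ := card_le_card fun y hy => by
          obtain ⟨w, -, rfl⟩ := mem_image.mp hy
          exact mem_biUnion.mpr ⟨w, mem_univ w, mem_filter.mpr ⟨hxL w, hadj w⟩⟩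

end

theorem stmt_0_general {V : Type*} {W : Type*} [Fintype V] [DecidableEq W]
    (G : SimpleGraph V) [DecidableRel G.Adj] (H : SimpleGraph W) (L : V → Finset W)
    (k : ℕ) (v : V) (hdeg : (G.neighborFinset v).card = k)
    (hcov : DPCover G H L) (hfold : ∀ u, (L u).card = k) :
    {I : Finset W |
        I ⊆ (G.neighborFinset v).biUnion L ∧
        I.card = k ∧
        (∀ u ∈ G.neighborFinset v, (I ∩ L u).card = 1) ∧
        (∀ a ∈ I, ∀ b ∈ I, a ≠ b → ¬ H.Adj a b) ∧
        (∀ w ∈ L v, ∃ x ∈ I, H.Adj w x)}.ncard ≤ k.factorial := by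
  classical
  let ofEmbedding : (L v ↪ G.neighborFinset v) → Finset W :=
    fun σ => neighborsInLists H L fun w => (σ w : V)
  calc _ ≤ ((univ.image ofEmbedding : Finset (Finset W)) : Set (Finset W)).ncard := by
        refine Set.ncard_le_ncard ?_ (finite_toSet _)
        rintro I ⟨hsub, hcard, hone, -, hbad⟩
        obtain ⟨σ, hσ⟩ :=
          hcov.exists_embedding_neighborsInLists_eq hsub (hcard.trans (hfold v).symm) hone hbad
        exact mem_coe.mpr (mem_image.mpr ⟨σ, mem_univ σ, hσ⟩)
    _ ≤ Fintype.card (L v ↪ G.neighborFinset v) := by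
        rw [Set.ncard_coe_finset]
        exact card_image_le
    _ = k.factorial := by
        rw [Fintype.card_embedding_eq, Fintype.card_coe, Fintype.card_coe, hfold, hdeg,
          Nat.descFactorial_self]

/-- **Lemma 5 (bad-set bound).** If `v` has exactly `k` neighbors and `(L,H)` is a `k`-fold
cover, then at most `k!` independent sets in `H` restricted to `⋃_{u ∈ N(v)} L u`, meeting
each neighbor's list exactly once, are bad for `v`. -/
theorem stmt_0 {V : Type*} {W : Type*} [Fintype V] [DecidableEq V] [DecidableEq W]
    (G : SimpleGraph V) [DecidableRel G.Adj] (H : SimpleGraph W) (L : V → Finset W)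
    (k : ℕ) (v : V) (hdeg : (G.neighborFinset v).card = k)
    (hcov : DPCover G H L) (hfold : ∀ u, (L u).card = k) :
    {I : Finset W |
        I ⊆ (G.neighborFinset v).biUnion L ∧
        I.card = k ∧
        (∀ u ∈ G.neighborFinset v, (I ∩ L u).card = 1) ∧
        (∀ a ∈ I, ∀ b ∈ I, a ≠ b → ¬ H.Adj a b) ∧
        (∀ w ∈ L v, ∃ x ∈ I, H.Adj w x)}.ncard ≤ k.factorial :=
  stmt_0_general G H L k v hdeg hcov hfold
end

section
/- For every natural number k ≥ 1 and every natural number t with t < k^k / k!, the DP-chromatic number of the complete bipartite graph K_{k,t} is at most k; that is, for every k-fold cover 𝓗 = (L,H) of K_{k,t}, there exists an independent set in H meeting each list L(v) exactly once. -/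
open SimpleGraph Finset

/-!
Fix the colors `f` of the `k` left vertices first: there are `k^k` choices. A right vertex `b`
can still be colored unless every vertex of its list `L b` has a neighbour among the chosen
colors. Since the cross-edges form matchings, such a choice `f` induces a bijection between
`L b` and the left vertices, from which `f` can be recovered; so at most `k!` choices are bad
for `b`. As `t · k! < k^k`, some choice is bad for no right vertex.
-/

open Nat

section

variable {V W ι : Type*}

def Dominates (H : SimpleGraph W) (N : Finset W) (f : ι → W) : Prop :=
  ∀ w ∈ N, ∃ i, H.Adj (f i) w

theorem Finset.exists_mem_forall_not_of_sum_card_filter_lt {α β : Type*} [Fintype β]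
    {s : Finset α} (P : β → α → Prop) [∀ b, DecidablePred (P b)]
    (h : ∑ b, #{x ∈ s | P b x} < #s) : ∃ x ∈ s, ∀ b, ¬ P b x := by
  classical
  by_contra! hcover
  have hsub : s ⊆ univ.biUnion fun b => {x ∈ s | P b x} := fun x hx => by
    obtain ⟨b, hb⟩ := hcover x hx
    exact mem_biUnion.mpr ⟨b, mem_univ b, mem_filter.mpr ⟨hx, hb⟩⟩
  exact (card_le_card hsub |>.trans card_biUnion_le).not_gt h

namespace DPCover

variable {G : SimpleGraph V} {H : SimpleGraph W} {L : V → Finset W}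

theorem card_filter_dominates_le [Fintype ι] [DecidableEq ι] (hcov : DPCover G H L)
    (u : ι → V) (v : V) [DecidablePred (Dominates (ι := ι) H (L v))]
    (hadj : ∀ i, G.Adj (u i) v) (hcard : #(L v) = Fintype.card ι) :
    #{f ∈ Fintype.piFinset (fun i => L (u i)) | Dominates H (L v) f} ≤ (Fintype.card ι)! := by
  classical
  set S := {f ∈ Fintype.piFinset (fun i => L (u i)) | Dominates H (L v) f}
  have hmem : ∀ f : S, ∀ i, f.1 i ∈ L (u i) := fun f =>
    Fintype.mem_piFinset.mp (mem_filter.mp f.2).1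
  have hdom : ∀ f : S, ∀ w : L v, ∃ i, H.Adj (f.1 i) w := fun f w =>
    (mem_filter.mp f.2).2 w w.2
  choose σ hσ using hdom
  have hσ_inj : ∀ f, Function.Injective (σ f) := fun f w w' h => by
    have h' := hσ f w'
    rw [← h] at h'
    exact Subtype.ext <| hcov.matching _ _ (hadj _) _ (hmem f _) _ w.2 _ w'.2 (hσ f w) h'
  have hσ_bij : ∀ f, Function.Bijective (σ f) := fun f =>
    (Fintype.bijective_iff_injective_and_card _).mpr ⟨hσ_inj f, by simpa using hcard⟩
  -- `f i` is the unique neighbour in `L (u i)` of the color that `σ f` sends to `i`.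
  have hσ_equiv_inj : Function.Injective fun f => Equiv.ofBijective (σ f) (hσ_bij f) := by
    intro f f' h
    have hσ_eq : σ f = σ f' := congrArg (⇑) h
    ext1; funext i
    obtain ⟨w, rfl⟩ := (hσ_bij f).2 i
    have h' := hσ f' w
    rw [← hσ_eq] at h'
    exact hcov.matching _ _ (hadj _).symm _ w.2 _ (hmem f _) _ (hmem f' _)
      (hσ f w).symm h'.symm
  calc #S = Fintype.card S := (Fintype.card_coe S).symm
    _ ≤ Fintype.card (L v ≃ ι) := Fintype.card_le_of_injective _ hσ_equiv_inj
    _ = (Fintype.card ι)! := by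
      rw [Fintype.card_equiv (Fintype.equivOfCardEq (by simpa using hcard)), Fintype.card_coe,
        hcard]

end DPCover

theorem Kb.isHColoring_sum_elim {k t : ℕ} {H : SimpleGraph W}
    {L : Fin k ⊕ Fin t → Finset W} (hcov : DPCover (Kb k t) H L) {f : Fin k → W}
    {g : Fin t → W} (hf : ∀ a, f a ∈ L (.inl a)) (hg : ∀ b, g b ∈ L (.inr b))
    (hfg : ∀ a b, ¬ H.Adj (f a) (g b)) : IsHColoring H L (Sum.elim f g) := by
  have hmem : ∀ u, Sum.elim f g u ∈ L u := by
    rintro (a | b)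
    exacts [hf a, hg b]
  refine ⟨hmem, fun u v huv hadj => ?_⟩
  rcases hcov.cross _ _ hadj u v (hmem u) (hmem v) with rfl | hG
  · exact huv rfl
  rcases u with a | b <;> rcases v with a' | b' <;> simp [Kb] at hG
  · exact hfg a b' hadj
  · exact hfg a' b hadj.symm

end

theorem stmt_1_general (k t : ℕ)
    (ht : (t : ℝ) < (k : ℝ) ^ k / (k.factorial : ℝ))
    {W : Type*} (H : SimpleGraph W) (L : Fin k ⊕ Fin t → Finset W)
    (hcov : DPCover (Kb k t) H L) (hfold : ∀ u, (L u).card = k) :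
    ∃ c : Fin k ⊕ Fin t → W, IsHColoring H L c := by
  classical
  obtain ⟨f, hf, hfree⟩ : ∃ f ∈ Fintype.piFinset (fun a => L (.inl a)),
      ∀ b, ¬ Dominates H (L (.inr b)) f := by
    apply exists_mem_forall_not_of_sum_card_filter_lt
    calc ∑ b, #{f ∈ Fintype.piFinset (fun a => L (.inl a)) | Dominates H (L (.inr b)) f}
        ≤ ∑ _b : Fin t, k ! := sum_le_sum fun b _ => by
          simpa using hcov.card_filter_dominates_le Sum.inl (.inr b) (by simp [Kb])
            (by simp [hfold])
      _ = t * k ! := by simp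
      _ < k ^ k := by exact_mod_cast (lt_div_iff₀ (by positivity)).mp ht
      _ = _ := by simp [hfold]
  simp only [Dominates, not_forall, not_exists] at hfree
  choose g hg hfg using hfree
  exact ⟨_, Kb.isHColoring_sum_elim hcov (Fintype.mem_piFinset.mp hf) hg fun a b => hfg b a⟩

/-- **Theorem 4 (lower bound).** If `t < k^k / k!` then every `k`-fold cover of `K_{k,t}`
admits an `𝓗`-coloring, i.e. `χ_DP(K_{k,t}) ≤ k`. -/
theorem stmt_1 (k t : ℕ) (hk : 1 ≤ k)
    (ht : (t : ℝ) < (k : ℝ) ^ k / (k.factorial : ℝ))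
    {W : Type*} (H : SimpleGraph W) (L : Fin k ⊕ Fin t → Finset W)
    (hcov : DPCover (Kb k t) H L) (hfold : ∀ u, (L u).card = k) :
    ∃ c : Fin k ⊕ Fin t → W, IsHColoring H L c :=
  stmt_1_general k t ht H L hcov hfold
end

section
/- For every k ≥ 1, if t ≥ k^k then there exists a list assignment L for K_{k,t} with |L(v)| = k for every vertex v such that K_{k,t} has no proper L-coloring; hence χ_ℓ(K_{k,t}) = k + 1. -/
open SimpleGraph Finset

/-- `G` is `k`-choosable: every assignment of lists of size `k` admits a proper coloring
from the lists. -/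
def Choosable {V : Type*} (G : SimpleGraph V) (k : ℕ) : Prop :=
  ∀ C : V → Finset ℕ, (∀ v, (C v).card = k) →
    ∃ f : V → ℕ, (∀ v, f v ∈ C v) ∧ ∀ u v : V, G.Adj u v → f u ≠ f v

/-- The list chromatic number: the least `k` such that `G` is `k`-choosable. -/
noncomputable def chiList {V : Type*} (G : SimpleGraph V) : ℕ := sInf {k | Choosable G k}

/-! Give the vertices of `X` pairwise disjoint lists of size `k` and let every transversal of
these lists appear as the list of some vertex of `Y`; there are `k ^ k` transversals. Any
coloring from the lists restricts on `X` to a transversal, and the vertex of `Y` carrying it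
sees all of its colors. Conversely `K_{k,t}` is `(k+1)`-choosable: color `X` arbitrarily, and
each vertex of `Y` still has a free color. Since choosability is monotone in the list size
(shrink the lists), this pins down `χ_ℓ(K_{k,t}) = k + 1`. -/

theorem Choosable.mono {V : Type*} {G : SimpleGraph V} {j k : ℕ} (hG : Choosable G j)
    (hjk : j ≤ k) : Choosable G k := by
  intro C hC
  have hsub : ∀ v, ∃ s ⊆ C v, s.card = j := fun v =>
    exists_subset_card_eq (by rw [hC]; exact hjk)
  choose C' hC'sub hC'card using hsub
  obtain ⟨f, hf, hproper⟩ := hG C' hC'card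
  exact ⟨f, fun v => hC'sub v (hf v), hproper⟩

theorem chiList_eq_succ {V : Type*} {G : SimpleGraph V} {k : ℕ} (hsucc : Choosable G (k + 1))
    (hk : ¬ Choosable G k) : chiList G = k + 1 :=
  (Nat.sInf_upward_closed_eq_succ_iff (fun _ _ hle h => Choosable.mono h hle) k).2 ⟨hsucc, hk⟩

theorem completeBipartiteGraph_choosable (X Y : Type*) [Fintype X] {n : ℕ}
    (hX : Fintype.card X ≤ n) : Choosable (completeBipartiteGraph X Y) (n + 1) := by
  intro C hC
  have hXne : ∀ x, (C (Sum.inl x)).Nonempty := fun x => card_pos.mp (by rw [hC]; omega)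
  choose fX hfX using hXne
  have hYfree : ∀ y, ∃ c ∈ C (Sum.inr y), c ∉ univ.image fX := fun y =>
    exists_mem_notMem_of_card_lt_card <| by
      rw [hC]; exact Nat.lt_succ_of_le (card_image_le.trans hX)
  choose fY hfY hfresh using hYfree
  refine ⟨Sum.elim fX fY, Sum.rec hfX hfY, ?_⟩
  rintro (x | y) (x' | y') hadj
  · simp at hadj
  · exact fun h => hfresh y' (mem_image.2 ⟨x, mem_univ x, h⟩)
  · exact fun h => hfresh y (mem_image.2 ⟨x', mem_univ x', h.symm⟩)
  · simp at hadj

theorem not_exists_coloring_of_forall_transversal {X Y : Type*} [Fintype X]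
    (C : X ⊕ Y → Finset ℕ)
    (htrans : ∀ g : X → ℕ, (∀ x, g x ∈ C (Sum.inl x)) →
      ∃ y, C (Sum.inr y) ⊆ univ.image g) :
    ¬ ∃ f : X ⊕ Y → ℕ, (∀ v, f v ∈ C v) ∧
      ∀ u v, (completeBipartiteGraph X Y).Adj u v → f u ≠ f v := by
  rintro ⟨f, hf, hproper⟩
  obtain ⟨y, hy⟩ := htrans (fun x => f (Sum.inl x)) (fun x => hf _)
  obtain ⟨x, -, hx⟩ := mem_image.1 (hy (hf (Sum.inr y)))
  exact hproper (Sum.inl x) (Sum.inr y) (by simp) hx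

def transversalLists (k : ℕ) {Y : Type*} (label : Y → Fin k → Fin k) :
    Fin k ⊕ Y → Finset ℕ :=
  Sum.elim (fun i => univ.image fun c : Fin k => Nat.pair i c)
    (fun y => univ.image fun i : Fin k => Nat.pair i (label y i))

theorem card_transversalLists (k : ℕ) {Y : Type*} (label : Y → Fin k → Fin k)
    (v : Fin k ⊕ Y) : (transversalLists k label v).card = k := by
  rcases v with i | y <;> simp only [transversalLists, Sum.elim_inl, Sum.elim_inr] <;>
    rw [card_image_of_injective _ fun a b hab => ?_, card_univ, Fintype.card_fin]
  · exact Fin.val_injective (Nat.pair_eq_pair.1 hab).2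
  · exact Fin.val_injective (Nat.pair_eq_pair.1 hab).1

theorem not_exists_coloring_transversalLists (k : ℕ) {Y : Type*} (label : Y → Fin k → Fin k)
    (hlabel : Function.Surjective label) :
    ¬ ∃ f : Fin k ⊕ Y → ℕ, (∀ v, f v ∈ transversalLists k label v) ∧
      ∀ u v, (completeBipartiteGraph (Fin k) Y).Adj u v → f u ≠ f v := by
  refine not_exists_coloring_of_forall_transversal _ fun g hg => ?_
  have hσ : ∀ i : Fin k, ∃ c : Fin k, Nat.pair i c = g i := fun i => by
    simpa [transversalLists] using hg i
  choose σ hσ using hσ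
  obtain ⟨y, rfl⟩ := hlabel σ
  refine ⟨y, fun c hc => ?_⟩
  obtain ⟨i, -, rfl⟩ := mem_image.1 hc
  exact mem_image.2 ⟨i, mem_univ i, (hσ i).symm⟩

theorem stmt_11_general (k t : ℕ) (ht : k ^ k ≤ t) :
    (∃ C : Fin k ⊕ Fin t → Finset ℕ, (∀ v, (C v).card = k) ∧
      ¬ ∃ f : Fin k ⊕ Fin t → ℕ, (∀ v, f v ∈ C v) ∧
        ∀ u v, (Kb k t).Adj u v → f u ≠ f v) ∧
    chiList (Kb k t) = k + 1 := by
  obtain ⟨label, hlabel⟩ : ∃ label : Fin t → Fin k → Fin k, Function.Surjective label :=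
    Function.exists_surjective_iff.2
      ⟨⟨fun _ => id⟩, Function.Embedding.nonempty_of_card_le (by simpa using ht)⟩
  have hbad := not_exists_coloring_transversalLists k label hlabel
  refine ⟨⟨_, card_transversalLists k label, hbad⟩, chiList_eq_succ ?_ ?_⟩
  · exact completeBipartiteGraph_choosable (Fin k) (Fin t) (Fintype.card_fin k).le
  · exact fun h => hbad (h _ (card_transversalLists k label))

/-- **Hard direction of Theorem 1.** If `t ≥ k^k` then `K_{k,t}` admits a `k`-assignment
with no proper coloring from the lists; hence `χ_ℓ(K_{k,t}) = k + 1`. -/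
theorem stmt_11 (k t : ℕ) (hk : 1 ≤ k) (ht : k ^ k ≤ t) :
    (∃ C : Fin k ⊕ Fin t → Finset ℕ, (∀ v, (C v).card = k) ∧
      ¬ ∃ f : Fin k ⊕ Fin t → ℕ, (∀ v, f v ∈ C v) ∧
        ∀ u v, (Kb k t).Adj u v → f u ≠ f v) ∧
    chiList (Kb k t) = k + 1 :=
  stmt_11_general k t ht
end

section
/- For every k ≥ 1 and every t < k^k, the complete bipartite graph K_{k,t} is k-choosable: for every list assignment L with |L(v)| = k for all v, K_{k,t} admits a proper L-coloring. -/
/-!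
Color `X` first. A color set `S` on `X` blocks a vertex `u ∈ Y` only if `L(u) ⊆ S`, and since
`|S| ≤ k = |L(u)|` this forces `L(u) = S`, with `S` a `k`-set. If two lists on `X` share a color,
using it twice gives `|S| < k` and nothing is blocked. Otherwise the lists on `X` are pairwise
disjoint, so distinct choices give distinct color sets: there are `k ^ k > t` of them, and one is
not the list of any vertex of `Y`.
-/

open SimpleGraph Finset

open Function

theorem completeBipartiteGraph_adj_sumElim_ne {V W α : Type*} {f : V → α} {c : W → α}
    (h : ∀ i j, f i ≠ c j) :
    ∀ u v, (completeBipartiteGraph V W).Adj u v → Sum.elim f c u ≠ Sum.elim f c v := by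
  rintro (i | j) (i' | j') huv <;> simp_all [completeBipartiteGraph, Ne.symm]

variable {ι κ α : Type*} [Fintype ι] [DecidableEq α]

theorem injOn_image_univ_piFinset [DecidableEq ι] {A : ι → Finset α}
    (hA : Pairwise (Disjoint on A)) :
    Set.InjOn (fun g : ι → α => univ.image g) (Fintype.piFinset A) := by
  intro g hg g' hg' hgg'
  rw [mem_coe, Fintype.mem_piFinset] at hg hg'
  funext i
  have hgi : g i ∈ univ.image g' := by
    simp only at hgg'
    exact hgg' ▸ mem_image_of_mem g (mem_univ i)
  obtain ⟨i', -, hi'⟩ := mem_image.mp hgi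
  obtain rfl : i' = i := by
    by_contra hne
    exact disjoint_left.mp (hA hne) (hg' i') (hi' ▸ hg i)
  exact hi'.symm

theorem exists_forall_mem_image_univ_notMem [DecidableEq ι] {A : ι → Finset α}
    (hA : Pairwise (Disjoint on A)) {𝓑 : Finset (Finset α)} (h𝓑 : #𝓑 < ∏ i, #(A i)) :
    ∃ g : ι → α, (∀ i, g i ∈ A i) ∧ univ.image g ∉ 𝓑 := by
  have hcard : #𝓑 < #((Fintype.piFinset A).image fun g => univ.image g) := by
    rwa [card_image_of_injOn (injOn_image_univ_piFinset hA), Fintype.card_piFinset]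
  obtain ⟨S, hS, hS𝓑⟩ := exists_mem_notMem_of_card_lt_card hcard
  obtain ⟨g, hg, rfl⟩ := mem_image.mp hS
  exact ⟨g, Fintype.mem_piFinset.mp hg, hS𝓑⟩

theorem exists_forall_mem_card_image_univ_lt {A : ι → Finset α}
    (hA : ¬ Pairwise (Disjoint on A)) (hne : ∀ i, (A i).Nonempty) :
    ∃ g : ι → α, (∀ i, g i ∈ A i) ∧ #(univ.image g) < Fintype.card ι := by
  simp only [Pairwise, onFun, not_disjoint_iff, not_forall] at hA
  obtain ⟨i, i', hii', a, hai, hai'⟩ := hA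
  choose pick hpick using hne
  let g : ι → α := fun j => if a ∈ A j then a else pick j
  have hg : ∀ j, g j ∈ A j := fun j => by
    by_cases haj : a ∈ A j
    · simp [g, haj]
    · simpa [g, haj] using hpick j
  refine ⟨g, hg, lt_of_le_of_ne (card_image_le.trans_eq card_univ) fun hcard => hii' ?_⟩
  rw [← card_univ, card_image_iff] at hcard
  exact hcard (mem_coe.mpr (mem_univ i)) (mem_coe.mpr (mem_univ i')) (by simp [g, hai, hai'])

theorem exists_forall_mem_forall_not_subset_image_univ [Fintype κ] [DecidableEq ι]
    {A : ι → Finset α} (hA : ∀ i, #(A i) = Fintype.card ι)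
    {B : κ → Finset α} (hB : ∀ j, #(B j) = Fintype.card ι)
    (hκ : Fintype.card κ < Fintype.card ι ^ Fintype.card ι) :
    ∃ g : ι → α, (∀ i, g i ∈ A i) ∧ ∀ j, ¬ B j ⊆ univ.image g := by
  by_cases hdisj : Pairwise (Disjoint on A)
  · have hcard : #(univ.image B) < ∏ i, #(A i) := by
      simpa [hA] using card_image_le.trans_lt hκ
    obtain ⟨g, hgA, hg⟩ := exists_forall_mem_image_univ_notMem hdisj hcard
    refine ⟨g, hgA, fun j hj => hg ?_⟩
    have hBj : B j = univ.image g :=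
      eq_of_subset_of_card_le hj (by rw [hB]; exact card_image_le.trans_eq card_univ)
    exact hBj ▸ mem_image_of_mem B (mem_univ j)
  · have hne (i : ι) : (A i).Nonempty := card_pos.mp (hA i ▸ Fintype.card_pos_iff.mpr ⟨i⟩)
    obtain ⟨g, hgA, hg⟩ := exists_forall_mem_card_image_univ_lt hdisj hne
    exact ⟨g, hgA, fun j hj => (card_le_card hj).not_gt (hB j ▸ hg)⟩

theorem stmt_12_general (k t : ℕ) (ht : t < k ^ k)
    (C : Fin k ⊕ Fin t → Finset ℕ) (hC : ∀ v, (C v).card = k) :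
    ∃ f : Fin k ⊕ Fin t → ℕ, (∀ v, f v ∈ C v) ∧
      ∀ u v, (Kb k t).Adj u v → f u ≠ f v := by
  obtain ⟨g, hgC, hg⟩ := exists_forall_mem_forall_not_subset_image_univ
    (A := fun i => C (.inl i)) (B := fun j => C (.inr j))
    (by simpa using fun i => hC (.inl i)) (by simpa using fun j => hC (.inr j)) (by simpa using ht)
  choose c hcC hcg using fun j => not_subset.mp (hg j)
  refine ⟨Sum.elim g c, Sum.rec hgC hcC, completeBipartiteGraph_adj_sumElim_ne fun i j hij =>
    hcg j (hij ▸ mem_image_of_mem g (mem_univ i))⟩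

/-- **Easy direction of Theorem 1.** If `t < k^k` then `K_{k,t}` is `k`-choosable. -/
theorem stmt_12 (k t : ℕ) (hk : 1 ≤ k) (ht : t < k ^ k)
    (C : Fin k ⊕ Fin t → Finset ℕ) (hC : ∀ v, (C v).card = k) :
    ∃ f : Fin k ⊕ Fin t → ℕ, (∀ v, f v ∈ C v) ∧
      ∀ u v, (Kb k t).Adj u v → f u ≠ f v :=
  stmt_12_general k t ht C hC
end
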